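/- In the cyclic suffix array of a multiset of primitive cyclic strings W, the suffix at rank i satisfies W_{SA_W[i]} = v̂[i] · v̂[Ψ_v(i)] · v̂[Ψ_v²(i)] · v̂[Ψ_v³(i)] · ⋯, where v = BWT(W), v̂ is v sorted, and Ψ_v is the standard permutation of v. -/

import Mathlib

set_option linter.unusedSectionVars false

namespace SILA

variable {α : Type*} [LinearOrder α]

/-- Lexicographic order on infinite strings. -/
def lexLE (f g : ℕ → α) : Prop :=
  f = g ∨ ∃ k, (∀ m < k, f m = g m) ∧ f k < g k

/-- Length of longest common prefix of two infinite strings, in ℕ∞. -/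
noncomputable def lcpInf (f g : ℕ → α) : ℕ∞ :=
  sSup {m : ℕ∞ | ∀ k : ℕ, (k : ℕ∞) < m → f k = g k}

/-- A (nonempty) cyclic word. -/
structure CyclicWord (α : Type*) where
  word : List α
  ne : word ≠ []

def CyclicWord.len (w : CyclicWord α) : ℕ := w.word.length

lemma CyclicWord.len_pos (w : CyclicWord α) : 0 < w.len :=
  List.length_pos_iff.mpr w.ne

/-- Positions in a multiset (family) of cyclic words. -/
def Pos {s : ℕ} (W : Fin s → CyclicWord α) : Type _ :=
  (i : Fin s) × Fin (W i).len

instance {s : ℕ} (W : Fin s → CyclicWord α) : Fintype (Pos W) := by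
  unfold Pos; infer_instance

/-- The infinite cyclic suffix starting at a position. -/
def suffixAt {s : ℕ} (W : Fin s → CyclicWord α) (p : Pos W) : ℕ → α :=
  fun k => (W p.1).word.get ⟨(p.2.val + k) % (W p.1).len, Nat.mod_lt _ (W p.1).len_pos⟩

/-- `SA` is a cyclic suffix array of `W`: it enumerates all positions in
nondecreasing lexicographic order of their cyclic suffixes. -/
def IsCyclicSA {s n : ℕ} (W : Fin s → CyclicWord α) (SA : Fin n ≃ Pos W) : Prop :=
  ∀ r r' : Fin n, r ≤ r' → lexLE (suffixAt W (SA r)) (suffixAt W (SA r'))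

/-- The LCP array of a cyclic suffix array (meaningful on indices 1..n-1). -/
noncomputable def lcpArr {s n : ℕ} (W : Fin s → CyclicWord α) (SA : Fin n ≃ Pos W)
    (r : ℕ) : ℕ∞ :=
  if h : 0 < r ∧ r < n then
    lcpInf (suffixAt W (SA ⟨r - 1, by omega⟩)) (suffixAt W (SA ⟨r, h.2⟩))
  else 0

/-- The Burrows–Wheeler transform: character cyclically preceding the suffix of rank `r`. -/
def bwt {s n : ℕ} (W : Fin s → CyclicWord α) (SA : Fin n ≃ Pos W) (r : Fin n) : α :=
  (W (SA r).1).word.get ⟨((SA r).2.val + (W (SA r).1).len - 1) % (W (SA r).1).len,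
    Nat.mod_lt _ (W (SA r).1).len_pos⟩

/-- `x` is a (finite) prefix of the infinite string `f`. -/
def IsPrefix (x : List α) (f : ℕ → α) : Prop :=
  ∀ m : Fin x.length, f m.val = x.get m

/-- `[i..j)` is the x-interval: the ranks of exactly those suffixes with prefix `x`. -/
def IsXInterval {s n : ℕ} (W : Fin s → CyclicWord α) (SA : Fin n ≃ Pos W)
    (x : List α) (i j : ℕ) : Prop :=
  i ≤ j ∧ j ≤ n ∧ ∀ r : Fin n, IsPrefix x (suffixAt W (SA r)) ↔ (i ≤ r.val ∧ r.val < j)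

/-- `[i..j)` is an ℓ-interval of the LCP array `L` (of length `n`, indices 1..n-1). -/
def IsLInterval (L : ℕ → ℕ∞) (n : ℕ) (ℓ : ℕ∞) (i j : ℕ) : Prop :=
  i < j ∧ j ≤ n ∧
  (i = 0 ∨ L i < ℓ) ∧
  (∀ r, i < r → r < j → ℓ ≤ L r) ∧
  ((i + 1 = j ∧ ℓ = ⊤) ∨ ∃ r, i < r ∧ r < j ∧ L r = ℓ) ∧
  (j = n ∨ L j < ℓ)

/-!
The BWT character of the suffix ranked at `Ψ r` is `v̂[r]`, so prepending it yields the cyclic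
suffix starting one position earlier. As `v̂` is sorted and `Ψ` is stable, these extended
suffixes, listed by `r`, are again in lexicographic order; since they run through all suffixes
exactly once, the list coincides with the suffix array itself. Hence the suffix of rank `r` is
`v̂[r]` followed by the suffix of rank `Ψ r`, and iterating gives the claim.
-/

def cons (a : α) (f : ℕ → α) : ℕ → α
  | 0 => a
  | k + 1 => f k

@[simp] lemma cons_zero (a : α) (f : ℕ → α) : cons a f 0 = a := rfl

@[simp] lemma cons_succ (a : α) (f : ℕ → α) (k : ℕ) : cons a f (k + 1) = f k := rfl

lemma lexLE_iff_toLex_le {f g : ℕ → α} : lexLE f g ↔ toLex f ≤ toLex g := by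
  rw [le_iff_eq_or_lt]
  exact Iff.rfl

lemma toLex_cons_lt_cons_of_lt {a b : α} {f g : ℕ → α} (h : a < b) :
    toLex (cons a f) < toLex (cons b g) :=
  ⟨0, fun _ hm => absurd hm (Nat.not_lt_zero _), h⟩

lemma toLex_cons_lt_cons (a : α) {f g : ℕ → α} (h : toLex f < toLex g) :
    toLex (cons a f) < toLex (cons a g) := by
  obtain ⟨k, hk, hlt⟩ := h
  refine ⟨k + 1, fun m hm => ?_, hlt⟩
  cases m with
  | zero => rfl
  | succ m => exact hk m (Nat.lt_of_succ_lt_succ hm)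

lemma toLex_cons_le_cons (a : α) {f g : ℕ → α} (h : toLex f ≤ toLex g) :
    toLex (cons a f) ≤ toLex (cons a g) := by
  rcases h.lt_or_eq with h | h
  · exact (toLex_cons_lt_cons a h).le
  · rw [toLex.injective h]

lemma monotone_toLex_cons {ι : Type*} [PartialOrder ι] {c : ι → α} {t : ι → ℕ → α}
    (hc : Monotone c) (ht : ∀ i j, i < j → c i = c j → toLex (t i) ≤ toLex (t j)) :
    Monotone fun i => toLex (cons (c i) (t i)) := by
  intro i j hij
  rcases hij.lt_or_eq with hij | rfl
  · rcases (hc hij.le).lt_or_eq with hc' | hc'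
    · exact (toLex_cons_lt_cons_of_lt hc').le
    · dsimp only
      rw [hc']
      exact toLex_cons_le_cons (c j) (ht i j hij hc')
  · exact le_rfl

lemma val_finRotate {m : ℕ} (q : Fin m) : (finRotate m q : ℕ) = (q + 1) % m := by
  have := q.neZero
  rw [finRotate_apply, Fin.val_add, Fin.val_one', Nat.add_mod_mod]

lemma val_finRotate_symm {m : ℕ} (q : Fin m) : ((finRotate m).symm q : ℕ) = (q + m - 1) % m := by
  obtain ⟨q, rfl⟩ := (finRotate m).surjective q
  have hm := q.pos
  rw [Equiv.symm_apply_apply, val_finRotate, Nat.add_sub_assoc hm, Nat.mod_add_mod,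
    Nat.add_assoc, Nat.add_sub_cancel' hm, Nat.add_mod_right, Nat.mod_eq_of_lt q.isLt]

section Positions

variable {s : ℕ} (W : Fin s → CyclicWord α)

def Pos.rotate : Equiv.Perm (Pos W) :=
  Equiv.sigmaCongrRight fun _ => finRotate _

lemma suffixAt_rotate (p : Pos W) (k : ℕ) :
    suffixAt W (Pos.rotate W p) k = suffixAt W p (k + 1) := by
  unfold suffixAt
  congr 2
  show ((finRotate _ p.2 : ℕ) + k) % (W p.1).len = (p.2 + (k + 1)) % (W p.1).len
  rw [val_finRotate, Nat.mod_add_mod, Nat.add_right_comm, Nat.add_assoc]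

lemma suffixAt_rotate_symm (p : Pos W) :
    suffixAt W ((Pos.rotate W).symm p) =
      cons (suffixAt W ((Pos.rotate W).symm p) 0) (suffixAt W p) := by
  funext k
  cases k with
  | zero => rfl
  | succ k => rw [← suffixAt_rotate, Equiv.apply_symm_apply]; rfl

lemma bwt_eq_suffixAt_rotate_symm {n : ℕ} (SA : Fin n ≃ Pos W) (r : Fin n) :
    bwt W SA r = suffixAt W ((Pos.rotate W).symm (SA r)) 0 := by
  unfold bwt suffixAt
  congr 2
  show _ = (((finRotate _).symm (SA r).2 : ℕ) + 0) % (W (SA r).1).len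
  rw [val_finRotate_symm, Nat.add_zero, Nat.mod_mod]

end Positions

lemma suffixAt_eq_cons_suffixAt_stdPerm {s n : ℕ} {W : Fin s → CyclicWord α}
    {SA : Fin n ≃ Pos W} (hSA : IsCyclicSA W SA) {vhat : Fin n → α} {Ψ : Equiv.Perm (Fin n)}
    (hsorted : Monotone vhat) (hperm : ∀ i, vhat i = bwt W SA (Ψ i))
    (hstable : ∀ i j : Fin n, i < j → vhat i = vhat j → Ψ i < Ψ j) (r : Fin n) :
    suffixAt W (SA r) = cons (vhat r) (suffixAt W (SA (Ψ r))) := by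
  let e : Equiv.Perm (Fin n) := Ψ.trans (SA.trans ((Pos.rotate W).symm.trans SA.symm))
  have he : ∀ r, suffixAt W (SA (e r)) = cons (vhat r) (suffixAt W (SA (Ψ r))) := fun r => by
    simp only [e, Equiv.trans_apply, Equiv.apply_symm_apply, hperm, bwt_eq_suffixAt_rotate_symm]
    exact suffixAt_rotate_symm W _
  let S : Fin n → Lex (ℕ → α) := fun r => toLex (suffixAt W (SA r))
  have hS : Monotone S := fun r r' h => lexLE_iff_toLex_le.mp (hSA r r' h)
  have hSe : Monotone (S ∘ e) := by
    simpa only [Function.comp_def, S, he] using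
      monotone_toLex_cons hsorted fun i j hij heq => hS (hstable i j hij heq).le
  have hSeS : S ∘ e = S ∘ (1 : Equiv.Perm (Fin n)) := Tuple.unique_monotone hSe hS
  rw [← he]
  exact toLex.injective (congrFun hSeS r).symm

theorem suffix_eq_iterate_stdPerm {α : Type*} [LinearOrder α] {s n : ℕ}
    (W : Fin s → CyclicWord α) (SA : Fin n ≃ Pos W) (hSA : IsCyclicSA W SA)
    (v : Fin n → α) (hv : v = bwt W SA)
    (vhat : Fin n → α) (Ψ : Equiv.Perm (Fin n))
    (hsorted : Monotone vhat)
    (hperm : ∀ i, vhat i = v (Ψ i))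
    (hstable : ∀ i j : Fin n, i < j → vhat i = vhat j → Ψ i < Ψ j) :
    ∀ (r : Fin n) (k : ℕ), suffixAt W (SA r) k = vhat ((Ψ ^ k) r) := by
  subst hv
  have step := suffixAt_eq_cons_suffixAt_stdPerm hSA hsorted hperm hstable
  intro r k
  induction k generalizing r with
  | zero => rw [step r, cons_zero, pow_zero, Equiv.Perm.one_apply]
  | succ k ih => rw [step r, cons_succ, ih, pow_succ, Equiv.Perm.mul_apply]

end SILA
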